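/- arXiv:2502.01917 — 2 statements merged into one kernel-verified Lean document; each statement's English description precedes it below -/
import Mathlib

section
/- Any tableau obtained from a standard tableau by deleting a set of rows remains standard. -/
open Finset

/-- `a >_σ b`: the first index where `a` and `b` differ has `a k < b k`. -/
def sigmaGT {n : ℕ} (a b : Fin n → ℕ+) : Prop :=
  ∃ k : Fin n, (∀ i : Fin n, i < k → a i = b i) ∧ a k < b k

/-- `a ≥_σ b`. -/
def sigmaGE {n : ℕ} (a b : Fin n → ℕ+) : Prop :=
  a = b ∨ sigmaGT a b

/-- A `p × n` tableau (rows in `ℤ₊ⁿ`) is semi-standard if its rows weakly decrease under `σ`. -/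
def SemiStandard {p n : ℕ} (A : Fin p → Fin n → ℕ+) : Prop :=
  ∀ i j : Fin p, i ≤ j → sigmaGE (A i) (A j)

/-- `suppEq A B`: every column of `A` equals the corresponding column of `B` as a multiset. -/
def suppEq {p n : ℕ} (A B : Fin p → Fin n → ℕ+) : Prop :=
  ∀ j : Fin n, Multiset.map (fun i => A i j) Finset.univ.val
    = Multiset.map (fun i => B i j) Finset.univ.val

/-- Row-wise lexicographic comparison of tableaux under `σ`: `A >_σ B`. -/
def tabGT {p n : ℕ} (A B : Fin p → Fin n → ℕ+) : Prop :=
  ∃ k : Fin p, (∀ i : Fin p, i < k → A i = B i) ∧ sigmaGT (A k) (B k)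

/-- A semi-standard tableau is standard if it is `σ`-minimal among all semi-standard
tableaux with the same column supports. -/
def IsStandard {p n : ℕ} (A : Fin p → Fin n → ℕ+) : Prop :=
  SemiStandard A ∧ ∀ B : Fin p → Fin n → ℕ+,
    SemiStandard B → suppEq B A → B ≠ A → tabGT B A

/-- An `n`-dimensional Ferrers diagram: a nonempty finite down-closed subset of `ℤ₊ⁿ`. -/
def IsFerrers {n : ℕ} (D : Set (Fin n → ℕ+)) : Prop :=
  D.Nonempty ∧ D.Finite ∧ ∀ b ∈ D, ∀ a : Fin n → ℕ+, (∀ i, a i ≤ b i) → a ∈ D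

/-- `D` is standardizable. -/
def Standardizable {n : ℕ} (D : Set (Fin n → ℕ+)) : Prop :=
  ∀ a ∈ D, ∀ b ∈ D, a ≠ b → ∀ k : Fin n,
    (∀ i : Fin n, i < k → a i = b i) → a k < b k →
    (fun i => if i ≤ k then a i else max (a i) (b i)) ∈ D

/-- degree of the variable `x_{i,j}` in the monomial `∏_ℓ x_{a ℓ}`. -/
def degOf {w n : ℕ} (a : Fin w → Fin n → ℕ+) (i : Fin n) (j : ℕ) : ℕ :=
  (Finset.univ.filter fun ℓ => ((a ℓ i : ℕ) = j)).card

/-! Through `toLex`, `a >_σ b` means `toLex a < toLex b`: semi-standard tableaux are those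
whose rows increase lexicographically, and a standard tableau is the lexicographically largest
one among those with the same columns. The lexicographic comparison of two increasing tableaux
only depends on their multisets of rows, and is read off from the counts of the smallest rows
where these multisets differ, so it survives adding the same rows to both. Hence if some `B`
beat the rows of `A` indexed by `f`, sorting the rows of `B` together with the deleted rows
of `A` would give a tableau with the columns of `A` that beats `A` itself. -/

namespace Multiset

variable {α : Type*} [LinearOrder α]

/-- `U` comes before `W` in the lexicographic order of their increasing enumerations. -/
def SortLT (U W : Multiset α) : Prop :=
  ∃ s, (∀ t ≤ s, W.count t ≤ U.count t) ∧ W.count s < U.count s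

theorem SortLT.asymm {U W : Multiset α} (h : SortLT U W) : ¬ SortLT W U := by
  obtain ⟨s, hle, hlt⟩ := h
  rintro ⟨s', hle', hlt'⟩
  rcases le_or_gt s' s with hs | hs
  · exact (hle s' hs).not_gt hlt'
  · exact (hle' s hs.le).not_gt hlt

theorem sortLT_irrefl (U : Multiset α) : ¬ SortLT U U :=
  fun h => h.asymm h

theorem SortLT.add_right {U W : Multiset α} (h : SortLT U W) (X : Multiset α) :
    SortLT (U + X) (W + X) := by
  obtain ⟨s, hle, hlt⟩ := h
  refine ⟨s, fun t ht => ?_, ?_⟩ <;> simp only [count_add]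
  · exact Nat.add_le_add_right (hle t ht) _
  · exact Nat.add_lt_add_right hlt _

theorem count_map_univ {m : ℕ} (u : Fin m → α) (t : α) :
    (univ.val.map u).count t = #{i | t = u i} := by
  rw [count_map, ← Finset.filter_val]
  rfl

theorem sortLT_of_toLex_lt {m : ℕ} {u w : Fin m → α} (hw : Monotone w)
    (h : toLex u < toLex w) : SortLT (univ.val.map u) (univ.val.map w) := by
  obtain ⟨k, hpre, hk⟩ := h
  have hsub : ∀ t ≤ u k, univ.filter (fun i => t = w i) ⊆ univ.filter (fun i => t = u i) := by
    intro t ht i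
    simp only [Finset.mem_filter, Finset.mem_univ, true_and]
    intro hi
    rcases lt_or_ge i k with hik | hki
    · exact hi.trans (hpre i hik).symm
    · exact absurd hi (ht.trans_lt (hk.trans_le (hw hki))).ne
  refine ⟨u k, fun t ht => ?_, ?_⟩ <;> simp only [count_map_univ]
  · exact Finset.card_le_card (hsub t ht)
  · refine Finset.card_lt_card ((hsub _ le_rfl).ssubset_of_not_subset fun hsup => ?_)
    exact hk.ne (by simpa using hsup (by simp : k ∈ univ.filter (fun i => u k = u i)))

theorem exists_monotone_map_univ (S : Multiset α) {m : ℕ} (hS : S.card = m) :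
    ∃ u : Fin m → α, Monotone u ∧ univ.val.map u = S := by
  set L := S.sort (· ≤ ·)
  obtain rfl : L.length = m := by simp [L, hS]
  refine ⟨L.get, fun i j hij => (S.pairwise_sort _).rel_get_of_le hij, ?_⟩
  rw [Fin.univ_val_map, List.ofFn_get, sort_eq]

end Multiset

open Multiset

section Tableau

variable {p q n : ℕ}

def rowMultiset (A : Fin p → Fin n → ℕ+) : Multiset (Lex (Fin n → ℕ+)) :=
  univ.val.map fun i => toLex (A i)

theorem sigmaGE_iff_toLex_le {a b : Fin n → ℕ+} : sigmaGE a b ↔ toLex a ≤ toLex b := by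
  rw [le_iff_lt_or_eq, sigmaGE, or_comm, toLex_inj]
  rfl

theorem semiStandard_iff_monotone {A : Fin p → Fin n → ℕ+} :
    SemiStandard A ↔ Monotone fun i => toLex (A i) := by
  simp only [SemiStandard, sigmaGE_iff_toLex_le, Monotone]

theorem tabGT_iff_toLex_lt {A B : Fin p → Fin n → ℕ+} :
    tabGT B A ↔ toLex (fun i => toLex (B i)) < toLex (fun i => toLex (A i)) :=
  Iff.rfl

theorem suppEq_iff_rowMultiset {A B : Fin p → Fin n → ℕ+} :
    suppEq A B ↔ ∀ j, (rowMultiset A).map (fun r : Lex (Fin n → ℕ+) => ofLex r j) =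
      (rowMultiset B).map (fun r : Lex (Fin n → ℕ+) => ofLex r j) := by
  simp only [suppEq, rowMultiset, Multiset.map_map]
  rfl

theorem suppEq_of_rowMultiset_eq_add {r : ℕ} {A C : Fin p → Fin n → ℕ+}
    {B B' : Fin r → Fin n → ℕ+} (hB : suppEq B B') (X : Multiset (Lex (Fin n → ℕ+)))
    (hC : rowMultiset C = rowMultiset B + X) (hA : rowMultiset A = rowMultiset B' + X) :
    suppEq C A := by
  rw [suppEq_iff_rowMultiset] at hB ⊢
  intro j
  rw [hC, hA, Multiset.map_add, Multiset.map_add, hB j]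

theorem rowMultiset_comp_le (A : Fin p → Fin n → ℕ+) (f : Fin q ↪ Fin p) :
    rowMultiset (fun i => A (f i)) ≤ rowMultiset A := by
  have : (univ.map f).val ≤ univ.val := val_le_iff.2 (subset_univ _)
  simpa only [rowMultiset, map_val, Multiset.map_map, Function.comp_def] using
    Multiset.map_le_map (f := fun i => toLex (A i)) this

end Tableau

theorem stmt7 {p q n : ℕ} (A : Fin p → Fin n → ℕ+) (hA : IsStandard A)
    (f : Fin q ↪o Fin p) : IsStandard (fun i => A (f i)) := by
  obtain ⟨hAmono, hAmax⟩ := hA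
  rw [semiStandard_iff_monotone] at hAmono
  refine ⟨semiStandard_iff_monotone.2 (hAmono.comp f.monotone), fun B hBmono hBA hne => ?_⟩
  rw [semiStandard_iff_monotone] at hBmono
  rw [tabGT_iff_toLex_lt]
  by_contra hge
  have hlt := (not_lt.1 hge).lt_of_ne fun h => hne (funext fun i => (congrFun h i).symm)
  obtain ⟨X, hX⟩ := Multiset.le_iff_exists_add.1 (rowMultiset_comp_le A f.toEmbedding)
  have hcard : (rowMultiset B + X).card = p := by
    simpa [rowMultiset] using (congrArg Multiset.card hX).symm
  obtain ⟨C, hCmono, hC⟩ := exists_monotone_map_univ _ hcard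
  have hup : SortLT (rowMultiset A) (rowMultiset fun i => ofLex (C i)) := by
    rw [hX]
    change SortLT _ (univ.val.map C)
    rw [hC]
    exact (sortLT_of_toLex_lt hBmono hlt).add_right X
  have hCA : (fun i => ofLex (C i)) ≠ A := by
    rintro hCA
    exact sortLT_irrefl _ (hCA ▸ hup)
  exact hup.asymm <| sortLT_of_toLex_lt hAmono <| tabGT_iff_toLex_lt.1 <|
    hAmax _ (semiStandard_iff_monotone.2 hCmono) (suppEq_of_rowMultiset_eq_add hBA X hC hX) hCA
end

section
/- Let D ⊆ ℤ₊ⁿ be a standardizable n-dimensional Ferrers diagram. Let [a; b] and [p; q] be two distinct 2×n semi-standard tableaux with equal column multisets (supp([p;q]) = supp([a;b])). If [p; q] is standard and a, b ∈ D, then p ∈ D and q ∈ D. -/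
/-! Let `a >_σ b` first differ in column `k`. Before `k` both rows of `[p; q]` equal `a = b`, and
`p ≥_σ q` forces `p k = a k`, `q k = b k`. Beyond `k` minimality forces `q j ≤ p j`: swapping a
column with `p j < q j` would give a smaller semi-standard tableau with the same columns. So `p` is
exactly the point that standardizability puts in `D`, and `q ≤ b` coordinatewise lies in `D` by
down-closure. -/

open Finset

lemma Multiset.pair_eq_pair_iff {α : Type*} {x y z w : α} :
    (x ::ₘ y ::ₘ 0 : Multiset α) = z ::ₘ w ::ₘ 0 ↔ (x = z ∧ y = w) ∨ (x = w ∧ y = z) := by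
  refine ⟨fun h => ?_, ?_⟩
  · rcases Multiset.cons_eq_cons.mp h with ⟨rfl, h⟩ | ⟨-, cs, hy, hw⟩
    · exact Or.inl ⟨rfl, by simpa using h⟩
    · have hcs : cs = 0 := by simpa using congrArg Multiset.card hy
      subst hcs
      exact Or.inr ⟨Multiset.singleton_inj.mp hw.symm, Multiset.singleton_inj.mp hy⟩
  · rintro (⟨rfl, rfl⟩ | ⟨rfl, rfl⟩)
    · rfl
    · exact Multiset.cons_swap _ _ _

section TwoRows

variable {n : ℕ} {a b p q : Fin n → ℕ+}

lemma semiStandard_pair_iff : SemiStandard ![a, b] ↔ sigmaGE a b := by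
  refine ⟨fun h => by simpa using h 0 1 (by decide), fun h i j hij => ?_⟩
  fin_cases i <;> fin_cases j
  · exact Or.inl rfl
  · simpa using h
  · exact absurd hij (by decide)
  · exact Or.inl rfl

lemma suppEq_pair_iff :
    suppEq ![p, q] ![a, b] ↔ ∀ j, (p j = a j ∧ q j = b j) ∨ (p j = b j ∧ q j = a j) :=
  forall_congr' fun _ => Multiset.pair_eq_pair_iff

lemma tabGT_pair_iff {c d : Fin n → ℕ+} :
    tabGT ![a, b] ![c, d] ↔ sigmaGT a c ∨ (a = c ∧ sigmaGT b d) := by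
  constructor
  · rintro ⟨r, hpre, hr⟩
    fin_cases r
    · exact Or.inl hr
    · exact Or.inr ⟨by simpa using hpre 0 (by decide), hr⟩
  · rintro (h | ⟨rfl, h⟩)
    · exact ⟨0, fun i hi => absurd hi (Fin.not_lt_zero i), h⟩
    · exact ⟨1, fun i hi => by fin_cases i <;> simp_all, h⟩

lemma not_sigmaGT_of_le (h : ∀ i, b i ≤ a i) : ¬ sigmaGT a b :=
  fun ⟨k, _, hk⟩ => (h k).not_gt hk

lemma sigmaGE.le_of_forall_lt_eq {k : Fin n} (h : sigmaGE p q) (hpre : ∀ i < k, p i = q i) :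
    p k ≤ q k := by
  rcases h with rfl | ⟨k', hpre', hk'⟩
  · rfl
  rcases lt_trichotomy k' k with h | rfl | h
  · exact absurd (hpre k' h) hk'.ne
  · exact hk'.le
  · exact (hpre' k h).le

lemma IsStandard.snd_le_fst {k j : Fin n} (hstd : IsStandard ![p, q])
    (hpre : ∀ i < k, p i = q i) (hk : p k < q k) (hkj : k < j) : q j ≤ p j := by
  by_contra! hlt
  set p' := Function.update p j (q j)
  set q' := Function.update q j (p j)
  have hp' : p' ≠ p := fun h => hlt.ne' (by simpa [p'] using congrFun h j)
  have hss : SemiStandard ![p', q'] := by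
    refine semiStandard_pair_iff.2 (Or.inr ⟨k, fun i hi => ?_, ?_⟩)
    · simp [p', q', Function.update_of_ne (hi.trans hkj).ne, hpre i hi]
    · simpa [p', q', Function.update_of_ne hkj.ne] using hk
  have hsupp : suppEq ![p', q'] ![p, q] := by
    refine suppEq_pair_iff.2 fun i => ?_
    rcases eq_or_ne i j with rfl | hij
    · simp [p', q']
    · simp [p', q', Function.update_of_ne hij]
  have hne : ![p', q'] ≠ ![p, q] := fun h => hp' (by simpa using congrFun h 0)
  rcases tabGT_pair_iff.1 (hstd.2 _ hss hsupp hne) with h | ⟨h, -⟩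
  · refine not_sigmaGT_of_le (fun i => ?_) h
    rcases eq_or_ne i j with rfl | hij
    · simpa [p'] using hlt.le
    · simp [p', Function.update_of_ne hij]
  · exact hp' h

lemma max_min_of_pair_of_le {α : Type*} [LinearOrder α] {x y u v : α}
    (h : (x = u ∧ y = v) ∨ (x = v ∧ y = u)) (hyx : y ≤ x) : x = max u v ∧ y = min u v := by
  rcases h with ⟨rfl, rfl⟩ | ⟨rfl, rfl⟩ <;> simp [hyx]

lemma IsStandard.eq_standardization {k : Fin n} (hstd : IsStandard ![p, q])
    (hcol : ∀ j, (p j = a j ∧ q j = b j) ∨ (p j = b j ∧ q j = a j))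
    (hpre : ∀ i < k, a i = b i) (hk : a k < b k) :
    p = (fun i => if i ≤ k then a i else max (a i) (b i)) ∧ ∀ i, q i ≤ b i := by
  have hbelow : ∀ i < k, p i = a i ∧ q i = b i := fun i hi => by
    rcases hcol i with h | h
    · exact h
    · rw [hpre i hi] at h ⊢
      exact h
  have hpreq : ∀ i < k, p i = q i := fun i hi => by
    rw [(hbelow i hi).1, (hbelow i hi).2, hpre i hi]
  have hat : p k = a k ∧ q k = b k := by
    have hle := (semiStandard_pair_iff.1 hstd.1).le_of_forall_lt_eq hpreq
    rcases hcol k with h | ⟨hp, hq⟩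
    · exact h
    · exact absurd (hle.trans_lt (hq ▸ hp ▸ hk)) (lt_irrefl _)
  have habove : ∀ j, k < j → p j = max (a j) (b j) ∧ q j = min (a j) (b j) := fun j hj =>
    max_min_of_pair_of_le (hcol j)
      (hstd.snd_le_fst hpreq (hat.1 ▸ hat.2 ▸ hk) hj)
  refine ⟨funext fun i => ?_, fun i => ?_⟩
  · rcases lt_trichotomy i k with h | rfl | h
    · simp [h.le, hbelow i h]
    · simp [hat]
    · simp [h.not_ge, habove i h]
  · rcases lt_trichotomy i k with h | rfl | h
    · exact (hbelow i h).2.le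
    · exact hat.2.le
    · exact (habove i h).2.trans_le (min_le_right _ _)

end TwoRows

theorem stmt9_general {n : ℕ} (D : Set (Fin n → ℕ+)) (hD : IsFerrers D)
    (hS : Standardizable D) (a b p q : Fin n → ℕ+)
    (hab : SemiStandard ![a, b])
    (hsupp : suppEq ![p, q] ![a, b])
    (hstd : IsStandard ![p, q]) (haD : a ∈ D) (hbD : b ∈ D) :
    p ∈ D ∧ q ∈ D := by
  have hcol := suppEq_pair_iff.1 hsupp
  rcases semiStandard_pair_iff.1 hab with rfl | ⟨k, hpre, hk⟩
  · have hpq : p = a ∧ q = a := by simpa [funext_iff, forall_and] using hcol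
    rw [hpq.1, hpq.2]
    exact ⟨haD, haD⟩
  · obtain ⟨hp, hq⟩ := hstd.eq_standardization hcol hpre hk
    exact ⟨hp ▸ hS a haD b hbD (fun h => hk.ne (congrFun h k)) k hpre hk, hD.2.2 b hbD q hq⟩

theorem stmt9 {n : ℕ} (D : Set (Fin n → ℕ+)) (hD : IsFerrers D)
    (hS : Standardizable D) (a b p q : Fin n → ℕ+)
    (hab : SemiStandard ![a, b]) (hpq : SemiStandard ![p, q])
    (hsupp : suppEq ![p, q] ![a, b]) (hne : ![a, b] ≠ ![p, q])
    (hstd : IsStandard ![p, q]) (haD : a ∈ D) (hbD : b ∈ D) :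
    p ∈ D ∧ q ∈ D :=
  stmt9_general D hD hS a b p q hab hsupp hstd haD hbD
end
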